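/- Correctness of the FS payload (retrieve_fses recovers the inserted forwarding segments): let s, s_0, …, s_{l−1} ∈ {0,1}^k be keys and FS_0, …, FS_{l−1} ∈ {0,1}^{|FS|} forwarding segments. Define P_0 = init_fs_payload(s) and P_{i+1} = add_fs(s_i, FS_i, P_i) for 0 ≤ i ≤ l−1 (node i inserts its FS). Then, when the retrieve_fses procedure is executed on input P_l with initialization key s and keys s_0, …, s_{l−1}: every MAC check in the loop succeeds (at the iteration with index i, the first k bits of the current P_full equal MAC(h_MAC(s_i); (P_full)_[k..rc−1])), and the extracted segments satisfy FS'_i = FS_i for every 0 ≤ i ≤ l−1; that is, the source recovers exactly the forwarding segments inserted by the nodes, in the reverse of the order in which they were added. -/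

import Mathlib

abbrev BS : Type := List Bool

def bxor (σ τ : BS) : BS := List.zipWith xor σ τ

/-- Substring from bit position `a` through `b` inclusive (0-indexed). -/
def substr (σ : BS) (a b : ℕ) : BS := (σ.drop a).take (b + 1 - a)

def zeros (a : ℕ) : BS := List.replicate a false

/-!
Undo the truncation in `add_fs`: let `W_j` be the payload built with the same insertions but
keeping every bit, so that `W_{j+1} = tag ‖ ((FS_j ‖ W_j) ⊕ mask_j[k..])` grows by `c` bits per
hop. Since `add_fs` only ever reads the first `r·c` bits, `P_j` is the `r·c`-bit prefix of `W_j`,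
and `ψ` is exactly the discarded tail of `W_l`: that tail is the initial payload's tail XORed
with the parts of the masks that were pushed past position `r·c`. Hence `P_l ‖ ψ = W_l`.
XORing `W_{i+1}` with `mask_i` cancels the encryption and exposes `tag ‖ FS_i ‖ W_i`, so every
loop iteration sees a correctly tagged `W_{i+1}`, reads off `FS_i`, and drops to `W_i`.
-/

def xorPrefix (m x : BS) : BS := bxor x (m ++ zeros x.length)

@[simp]
lemma length_bxor (x y : BS) : (bxor x y).length = min x.length y.length :=
  List.length_zipWith

@[simp]
lemma getElem_bxor (x y : BS) (i : ℕ) (h : i < (bxor x y).length) :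
    (bxor x y)[i] = (x[i]'(by simp at h; omega) ^^ y[i]'(by simp at h; omega)) :=
  List.getElem_zipWith

@[simp]
lemma length_xorPrefix (m x : BS) : (xorPrefix m x).length = x.length := by
  simp [xorPrefix, zeros]

@[simp]
lemma getElem_xorPrefix (m x : BS) (i : ℕ) (h : i < (xorPrefix m x).length) :
    (xorPrefix m x)[i] = (x[i]'(by simpa using h) ^^ m.getD i false) := by
  simp only [xorPrefix, zeros, getElem_bxor, List.getElem_append, List.getElem_replicate,
    List.getD_eq_getElem?_getD, Bool.bne_right_inj]
  split_ifs <;> simp_all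

lemma xorPrefix_nil (x : BS) : xorPrefix [] x = x := by
  apply List.ext_getElem <;> simp

lemma xorPrefix_xorPrefix (m x : BS) : xorPrefix m (xorPrefix m x) = x := by
  apply List.ext_getElem <;> simp

lemma xorPrefix_append (m a b : BS) :
    xorPrefix m (a ++ b) = xorPrefix m a ++ xorPrefix (m.drop a.length) b := by
  apply List.ext_getElem
  · simp
  · intro i h₁ h₂
    simp only [getElem_xorPrefix, List.getElem_append, length_xorPrefix]
    split_ifs
    · rfl
    · simp only [List.getD_eq_getElem?_getD, List.getElem?_drop, Bool.bne_right_inj]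
      congr 2
      omega

lemma drop_xorPrefix (m x : BS) (n : ℕ) :
    (xorPrefix m x).drop n = xorPrefix (m.drop n) (x.drop n) := by
  apply List.ext_getElem <;> simp

lemma take_xorPrefix (m x : BS) (n : ℕ) :
    (xorPrefix m x).take n = xorPrefix m (x.take n) := by
  apply List.ext_getElem <;> simp

lemma bxor_eq_xorPrefix_take (x m : BS) : bxor x m = xorPrefix m (x.take m.length) := by
  apply List.ext_getElem
  · simp [Nat.min_comm]
  · intro i h₁ h₂
    simp only [length_bxor, lt_inf_iff] at h₁
    simp [List.getD_eq_getElem?_getD, List.getElem?_eq_getElem h₁.2]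

lemma bxor_append_zeros (x m : BS) (a : ℕ) (h : x.length ≤ m.length + a) :
    bxor x (m ++ zeros a) = xorPrefix m x := by
  apply List.ext_getElem
  · simp [zeros]; omega
  · intro i h₁ h₂
    simp only [zeros, getElem_bxor, List.getElem_append, List.getElem_replicate, getElem_xorPrefix,
      List.getD_eq_getElem?_getD, Bool.bne_right_inj]
    split_ifs <;> simp_all

lemma substr_eq_drop (σ : BS) {a b : ℕ} (h : σ.length ≤ b + 1) : substr σ a b = σ.drop a :=
  List.take_of_length_le (by simp; omega)

lemma substr_zero (σ : BS) (b : ℕ) : substr σ 0 b = σ.take (b + 1) := rfl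

section AddFsFull

variable (k : ℕ) (tag : BS → BS) (mask F W : BS)

def addFsFull : BS :=
  tag (bxor (F ++ W) (mask.drop k)) ++ xorPrefix (mask.drop k) (F ++ W)

variable {k tag mask F W} (htag : ∀ x, (tag x).length = k)
include htag

lemma length_addFsFull : (addFsFull k tag mask F W).length = k + (F.length + W.length) := by
  simp [addFsFull, htag]

lemma take_addFsFull (hk : k ≤ mask.length) :
    (addFsFull k tag mask F W).take mask.length =
      tag (bxor (F ++ W) (mask.drop k)) ++ bxor (F ++ W) (mask.drop k) := by
  rw [addFsFull, List.take_append, List.take_of_length_le (by rw [htag]; omega), htag,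
    take_xorPrefix, bxor_eq_xorPrefix_take, List.length_drop]

lemma take_addFsFull_eq_tag :
    (addFsFull k tag mask F W).take k =
      tag (((addFsFull k tag mask F W).drop k).take (mask.length - k)) := by
  rw [addFsFull, List.take_left' (htag _), List.drop_left' (htag _), take_xorPrefix,
    ← List.length_drop, ← bxor_eq_xorPrefix_take]

lemma xorPrefix_addFsFull :
    xorPrefix mask (addFsFull k tag mask F W) =
      xorPrefix mask (tag (bxor (F ++ W) (mask.drop k))) ++ (F ++ W) := by
  rw [addFsFull, xorPrefix_append, htag, xorPrefix_xorPrefix]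

lemma drop_addFsFull (n : ℕ) :
    (addFsFull k tag mask F W).drop (F.length + k + n) =
      xorPrefix (mask.drop (F.length + k + n)) (W.drop n) := by
  rw [add_comm F.length, addFsFull, add_assoc, ← List.drop_drop, List.drop_left' (htag _),
    drop_xorPrefix, List.drop_drop, List.drop_length_add_append]

lemma drop_xorPrefix_addFsFull :
    (xorPrefix mask (addFsFull k tag mask F W)).drop (F.length + k) = W := by
  rw [xorPrefix_addFsFull htag, ← List.append_assoc]
  exact List.drop_left' (by simp [htag]; omega)

lemma substr_xorPrefix_addFsFull (hk : 1 ≤ k) :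
    substr (xorPrefix mask (addFsFull k tag mask F W)) k (F.length + k - 1) = F := by
  rw [xorPrefix_addFsFull htag, substr, List.drop_left' (by simp [htag]),
    show F.length + k - 1 + 1 - k = F.length by omega, List.take_left]

lemma take_addFsFull_of_substr {N b : ℕ} (hN : mask.length = N) (hk : k ≤ N)
    (hb : N ≤ F.length + k + (b + 1)) :
    tag (bxor (F ++ substr (W.take N) 0 b) (substr mask k (N - 1))) ++
        bxor (F ++ substr (W.take N) 0 b) (substr mask k (N - 1)) =
      (addFsFull k tag mask F W).take N := by
  have hX : bxor (F ++ substr (W.take N) 0 b) (substr mask k (N - 1)) =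
      bxor (F ++ W) (mask.drop k) := by
    rw [substr_eq_drop mask (by omega), bxor_eq_xorPrefix_take, bxor_eq_xorPrefix_take,
      substr_zero, List.take_take, List.take_append, List.take_append, List.take_take]
    congr 3
    simp only [List.length_drop, hN]
    omega
  rw [hX, ← hN, take_addFsFull htag (by omega)]

end AddFsFull

lemma List.foldl_range_eq_of_succ {α : Type*} (f : ℕ → α → α) (D : ℕ → α) {m : ℕ}
    (h : ∀ j < m, D (j + 1) = f j (D j)) :
    (List.range m).foldl (fun acc j => f j acc) (D 0) = D m := by
  induction m with
  | zero => rfl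
  | succ m ih =>
    rw [List.range_succ, List.foldl_append, ih fun j hj => h j (by omega), h m (by omega)]
    rfl

section FullPayload

variable (k : ℕ) (tag : ℕ → BS → BS) (mask FS : ℕ → BS) (init : BS)

def fullPayload : ℕ → BS
  | 0 => init
  | j + 1 => addFsFull k (tag j) (mask j) (FS j) (fullPayload j)

variable {k tag mask FS init} {N c l : ℕ}

lemma length_fullPayload (htag : ∀ j x, (tag j x).length = k)
    (hFS : ∀ j < l, (FS j).length + k = c) :
    ∀ j ≤ l, (fullPayload k tag mask FS init j).length = init.length + j * c := by
  intro j hj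
  induction j with
  | zero => simp [fullPayload]
  | succ j ih =>
    rw [fullPayload, length_addFsFull (htag j), ih (by omega), add_one_mul, ← hFS j (by omega)]
    ring

lemma drop_xorPrefix_fullPayload_succ (htag : ∀ j x, (tag j x).length = k)
    (hFS : ∀ j < l, (FS j).length + k = c) {i : ℕ} (hi : i < l) :
    (xorPrefix (mask i) (fullPayload k tag mask FS init (i + 1))).drop c =
      fullPayload k tag mask FS init i := by
  rw [fullPayload, ← hFS i hi]
  exact drop_xorPrefix_addFsFull (htag i)

lemma bxor_fullPayload_succ (htag : ∀ j x, (tag j x).length = k)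
    (hmask : ∀ j, (mask j).length = N) (hinit : init.length = N)
    (hFS : ∀ j < l, (FS j).length + k = c) {i : ℕ} (hi : i < l) :
    bxor (fullPayload k tag mask FS init (i + 1)) (mask i ++ zeros ((i + 1) * c)) =
      xorPrefix (mask i) (fullPayload k tag mask FS init (i + 1)) :=
  bxor_append_zeros _ _ _ (by rw [length_fullPayload htag hFS _ hi, hmask, hinit])

lemma substr_fullPayload_succ_eq_tag (htag : ∀ j x, (tag j x).length = k)
    (hmask : ∀ j, (mask j).length = N) (hk : 1 ≤ k) (i : ℕ) :
    substr (fullPayload k tag mask FS init (i + 1)) 0 (k - 1) =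
      tag i (substr (fullPayload k tag mask FS init (i + 1)) k (N - 1)) := by
  rw [substr_zero, substr, Nat.sub_add_cancel hk, fullPayload, take_addFsFull_eq_tag (htag i),
    hmask]
  congr 2
  omega

lemma substr_bxor_fullPayload_succ (htag : ∀ j x, (tag j x).length = k)
    (hmask : ∀ j, (mask j).length = N) (hinit : init.length = N)
    (hFS : ∀ j < l, (FS j).length + k = c) (hk : 1 ≤ k) {i : ℕ} (hi : i < l) :
    substr (bxor (fullPayload k tag mask FS init (i + 1)) (mask i ++ zeros ((i + 1) * c)))
      k (c - 1) = FS i := by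
  rw [bxor_fullPayload_succ htag hmask hinit hFS hi, fullPayload, ← hFS i hi]
  exact substr_xorPrefix_addFsFull (htag i) hk

lemma eq_take_fullPayload (htag : ∀ j x, (tag j x).length = k)
    (hmask : ∀ j, (mask j).length = N) (hinit : init.length = N)
    (hFS : ∀ j < l, (FS j).length + k = c) {b : ℕ} (hk : k ≤ N) (hb : N ≤ c + (b + 1))
    (P : ℕ → BS) (hP0 : P 0 = init)
    (hP : ∀ j < l, P (j + 1) =
      tag j (bxor (FS j ++ substr (P j) 0 b) (substr (mask j) k (N - 1))) ++
        bxor (FS j ++ substr (P j) 0 b) (substr (mask j) k (N - 1))) :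
    ∀ j ≤ l, P j = (fullPayload k tag mask FS init j).take N := by
  intro j hj
  induction j with
  | zero => rw [hP0, fullPayload, List.take_of_length_le hinit.le]
  | succ j ih =>
    rw [hP j hj, ih (by omega), fullPayload]
    exact take_addFsFull_of_substr (htag j) (hmask j) hk (by rw [hFS j hj]; exact hb)

lemma eq_fullPayload_sub_of_drop_bxor (htag : ∀ j x, (tag j x).length = k)
    (hmask : ∀ j, (mask j).length = N) (hinit : init.length = N)
    (hFS : ∀ j < l, (FS j).length + k = c) (V : ℕ → BS)
    (hV0 : V 0 = fullPayload k tag mask FS init l)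
    (hV : ∀ t < l, V (t + 1) =
      (bxor (V t) (mask (l - 1 - t) ++ zeros ((l - 1 - t + 1) * c))).drop c) :
    ∀ t ≤ l, V t = fullPayload k tag mask FS init (l - t) := by
  intro t ht
  induction t with
  | zero => exact hV0
  | succ t ih =>
    rw [hV t ht, ih (by omega), show l - t = l - 1 - t + 1 by omega,
      bxor_fullPayload_succ htag hmask hinit hFS (by omega),
      drop_xorPrefix_fullPayload_succ htag hFS (by omega)]
    congr 1
    omega

lemma drop_fullPayload_eq_foldl (htag : ∀ j x, (tag j x).length = k)
    (hmask : ∀ j, (mask j).length = N) (hinit : init.length = N)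
    (hFS : ∀ j < l, (FS j).length + k = c) {r a m : ℕ} (hN : N = r * c) (hm : a + m ≤ r)
    (hml : m ≤ l) :
    (fullPayload k tag mask FS init m).drop ((a + m) * c) =
      (List.range m).foldl
        (fun acc j => bxor acc (substr (mask j) ((a + 1 + j) * c) (N - 1) ++ zeros ((j + 1) * c)))
        (substr init (a * c) (N - 1)) := by
  have step : ∀ j < m, (fullPayload k tag mask FS init (j + 1)).drop ((a + (j + 1)) * c) =
      bxor ((fullPayload k tag mask FS init j).drop ((a + j) * c))
        (substr (mask j) ((a + 1 + j) * c) (N - 1) ++ zeros ((j + 1) * c)) := by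
    intro j hj
    have hshift : (FS j).length + k + (a + j) * c = (a + 1 + j) * c := by
      rw [hFS j (by omega)]; ring
    have hlen : ((fullPayload k tag mask FS init j).drop ((a + j) * c)).length ≤
        ((mask j).drop ((a + 1 + j) * c)).length + (j + 1) * c := by
      have hac : (a + 1 + j) * c ≤ r * c := Nat.mul_le_mul_right c (by omega)
      have e1 : (a + 1 + j) * c = (a + j) * c + c := by ring
      have e2 : (j + 1) * c = j * c + c := by ring
      rw [List.length_drop, List.length_drop, length_fullPayload htag hFS j (by omega), hmask,
        hinit]
      omega
    rw [substr_eq_drop _ (by rw [hmask]; omega), bxor_append_zeros _ _ _ hlen,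
      show a + (j + 1) = a + 1 + j by ring, ← hshift, fullPayload, drop_addFsFull (htag j)]
  have h := List.foldl_range_eq_of_succ
    (fun j acc => bxor acc (substr (mask j) ((a + 1 + j) * c) (N - 1) ++ zeros ((j + 1) * c)))
    (fun j => (fullPayload k tag mask FS init j).drop ((a + j) * c)) step
  rw [substr_eq_drop _ (by omega)]
  simpa only [add_zero, fullPayload] using h.symm

lemma drop_fullPayload_eq_foldl_pred (htag : ∀ j x, (tag j x).length = k)
    (hmask : ∀ j, (mask j).length = N) (hinit : init.length = N)
    (hFS : ∀ j < l, (FS j).length + k = c) {r : ℕ} (hN : N = r * c) (hl : 1 ≤ l) (hlr : l ≤ r) :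
    (fullPayload k tag mask FS init l).drop N =
      (List.range (l - 1)).foldl
        (fun acc j =>
          bxor acc (substr (mask j) ((r - l + 1 + j) * c) (N - 1) ++ zeros ((j + 1) * c)))
        (substr init ((r - l) * c) (N - 1)) := by
  obtain ⟨m, rfl⟩ : ∃ m, l = m + 1 := ⟨l - 1, by omega⟩
  obtain ⟨r, rfl⟩ : ∃ r', r = r' + 1 := ⟨r - 1, by omega⟩
  have hN' : (FS m).length + k + (r + 1 - (m + 1) + m) * c = N := by
    rw [hFS m (by omega), hN, show r + 1 - (m + 1) + m = r by omega]
    ring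
  calc (fullPayload k tag mask FS init (m + 1)).drop N
      = (fullPayload k tag mask FS init (m + 1)).drop
          ((FS m).length + k + (r + 1 - (m + 1) + m) * c) := by rw [hN']
    _ = (fullPayload k tag mask FS init m).drop ((r + 1 - (m + 1) + m) * c) := by
      rw [fullPayload, drop_addFsFull (htag m), List.drop_eq_nil_of_le (by rw [hmask, hN']),
        xorPrefix_nil]
    _ = _ := drop_fullPayload_eq_foldl htag hmask hinit hFS hN (by omega) (by omega)

end FullPayload

theorem retrieve_fses_correctness_general
    (k fsl r l : ℕ) (hk : 1 ≤ k)
    (hlr : l ≤ r)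
    (c : ℕ) (hc : c = fsl + k)
    (PRG0 PRG1 : BS → BS)
    (hPRG0len : ∀ x, (PRG0 x).length = r * c)
    (hPRG1len : ∀ x, (PRG1 x).length = r * c)
    (MAC : BS → BS → BS) (hMAClen : ∀ key msg, (MAC key msg).length = k)
    (hPRG0 hPRG1 hMAC : BS → BS)
    -- the initialization key and the per-node keys and forwarding segments
    (s : BS)
    (sk FS : ℕ → BS)
    (hFS : ∀ i, i < l → (FS i).length = fsl)
    -- init_fs_payload and add_fs
    (initFsPayload : BS → BS)
    (hinit : ∀ x, initFsPayload x = PRG1 (hPRG1 x))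
    (addFs : BS → BS → BS → BS)
    (haddFs : ∀ key F P, addFs key F P =
      MAC (hMAC key)
          (bxor (F ++ substr P 0 ((r - 1) * c - 1)) (substr (PRG0 (hPRG0 key)) k (r * c - 1)))
        ++ bxor (F ++ substr P 0 ((r - 1) * c - 1)) (substr (PRG0 (hPRG0 key)) k (r * c - 1)))
    -- the insertion process: node i inserts FS i
    (P : ℕ → BS)
    (hP0 : P 0 = initFsPayload s)
    (hPstep : ∀ i, i < l → P (i + 1) = addFs (sk i) (FS i) (P i))
    -- the padding string ψ computed by retrieve_fses
    (ψ : BS)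
    (hψ : ψ = (List.range (l - 1)).foldl
      (fun acc j =>
        bxor acc (substr (PRG0 (hPRG0 (sk j))) ((r - l + 1 + j) * c) (r * c - 1)
          ++ zeros ((j + 1) * c)))
      (substr (initFsPayload s) ((r - l) * c) (r * c - 1)))
    -- the loop states of retrieve_fses: V t is P_full before iteration t,
    -- which processes index i = l - 1 - t
    (V : ℕ → BS)
    (hV0 : V 0 = P l ++ ψ)
    (hVstep : ∀ t, t < l → V (t + 1) =
      (bxor (V t) (PRG0 (hPRG0 (sk (l - 1 - t))) ++ zeros ((l - 1 - t + 1) * c))).drop c) :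
    ∀ t, t < l →
      (substr (V t) 0 (k - 1)
        = MAC (hMAC (sk (l - 1 - t))) (substr (V t) k (r * c - 1))) ∧
      (substr (bxor (V t) (PRG0 (hPRG0 (sk (l - 1 - t))) ++ zeros ((l - 1 - t + 1) * c)))
          k (c - 1) = FS (l - 1 - t)) := by
  intro t ht
  have hFS' : ∀ j < l, (FS j).length + k = c := fun j hj => by rw [hFS j hj, hc]
  have hinitLen : (initFsPayload s).length = r * c := by rw [hinit]; exact hPRG1len _
  have htag : ∀ j x, (MAC (hMAC (sk j)) x).length = k := fun _ _ => hMAClen _ _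
  have hmask : ∀ j, (PRG0 (hPRG0 (sk j))).length = r * c := fun _ => hPRG0len _
  have hrc : c ≤ r * c := Nat.le_mul_of_pos_left c (by omega)
  have hPl := eq_take_fullPayload htag hmask hinitLen hFS' (b := (r - 1) * c - 1) (by omega)
    (by rw [Nat.sub_one_mul]; omega) P hP0 (fun j hj => (hPstep j hj).trans (haddFs _ _ _))
    l le_rfl
  have hψl := drop_fullPayload_eq_foldl_pred (FS := FS) htag hmask hinitLen hFS' rfl
    (by omega) hlr
  have hVt := eq_fullPayload_sub_of_drop_bxor htag hmask hinitLen hFS' V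
    (by rw [hV0, hPl, hψ, ← hψl, List.take_append_drop]) hVstep t ht.le
  rw [hVt, show l - t = l - 1 - t + 1 by omega]
  exact ⟨substr_fullPayload_succ_eq_tag htag hmask hk _,
    substr_bxor_fullPayload_succ htag hmask hinitLen hFS' hk (by omega)⟩

/-- Correctness of the FS payload: when `retrieve_fses`
(Algorithm 2) is executed on the payload `P l` obtained by successive
`add_fs` insertions, every MAC check in the loop succeeds and the extracted
segments equal the inserted forwarding segments (in reverse order of
insertion): at iteration `t` (processing index `i = l - 1 - t`), the first `k`
bits of the current `P_full` equal `MAC(h_MAC(s_i); (P_full)_[k..rc−1])` and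
the extracted segment equals `FS i`. -/
theorem retrieve_fses_correctness
    (k fsl r l : ℕ) (hk : 1 ≤ k) (hfsl : k ≤ fsl) (hr : 1 ≤ r)
    (hl1 : 1 ≤ l) (hlr : l ≤ r)
    (c : ℕ) (hc : c = fsl + k)
    (PRG0 PRG1 : BS → BS)
    (hPRG0len : ∀ x, (PRG0 x).length = r * c)
    (hPRG1len : ∀ x, (PRG1 x).length = r * c)
    (MAC : BS → BS → BS) (hMAClen : ∀ key msg, (MAC key msg).length = k)
    (hPRG0 hPRG1 hMAC : BS → BS)
    (hhPRG0len : ∀ x, (hPRG0 x).length = k)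
    (hhPRG1len : ∀ x, (hPRG1 x).length = k)
    (hhMAClen : ∀ x, (hMAC x).length = k)
    -- the initialization key and the per-node keys and forwarding segments
    (s : BS) (hslen : s.length = k)
    (sk FS : ℕ → BS)
    (hsk : ∀ i, i < l → (sk i).length = k)
    (hFS : ∀ i, i < l → (FS i).length = fsl)
    -- init_fs_payload and add_fs
    (initFsPayload : BS → BS)
    (hinit : ∀ x, initFsPayload x = PRG1 (hPRG1 x))
    (addFs : BS → BS → BS → BS)
    (haddFs : ∀ key F P, addFs key F P =
      MAC (hMAC key)
          (bxor (F ++ substr P 0 ((r - 1) * c - 1)) (substr (PRG0 (hPRG0 key)) k (r * c - 1)))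
        ++ bxor (F ++ substr P 0 ((r - 1) * c - 1)) (substr (PRG0 (hPRG0 key)) k (r * c - 1)))
    -- the insertion process: node i inserts FS i
    (P : ℕ → BS)
    (hP0 : P 0 = initFsPayload s)
    (hPstep : ∀ i, i < l → P (i + 1) = addFs (sk i) (FS i) (P i))
    -- the padding string ψ computed by retrieve_fses
    (ψ : BS)
    (hψ : ψ = (List.range (l - 1)).foldl
      (fun acc j =>
        bxor acc (substr (PRG0 (hPRG0 (sk j))) ((r - l + 1 + j) * c) (r * c - 1)
          ++ zeros ((j + 1) * c)))
      (substr (initFsPayload s) ((r - l) * c) (r * c - 1)))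
    -- the loop states of retrieve_fses: V t is P_full before iteration t,
    -- which processes index i = l - 1 - t
    (V : ℕ → BS)
    (hV0 : V 0 = P l ++ ψ)
    (hVstep : ∀ t, t < l → V (t + 1) =
      (bxor (V t) (PRG0 (hPRG0 (sk (l - 1 - t))) ++ zeros ((l - 1 - t + 1) * c))).drop c) :
    ∀ t, t < l →
      (substr (V t) 0 (k - 1)
        = MAC (hMAC (sk (l - 1 - t))) (substr (V t) k (r * c - 1))) ∧
      (substr (bxor (V t) (PRG0 (hPRG0 (sk (l - 1 - t))) ++ zeros ((l - 1 - t + 1) * c)))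
          k (c - 1) = FS (l - 1 - t)) :=
  retrieve_fses_correctness_general k fsl r l hk hlr c hc PRG0 PRG1 hPRG0len hPRG1len MAC hMAClen
    hPRG0 hPRG1 hMAC s sk FS hFS initFsPayload hinit addFs haddFs P hP0 hPstep ψ hψ V hV0 hVstep
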